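/- Let a>0, c>0 and set t_c := a(a+2√c), b_c := a+√c, γ_c := 2·b_c^{1/3}·c^{1/6}/a^{1/3}. Fix s>0 and for N>0 set t_N := t_c + 2·b_c·s/(γ_c·N^{2/3}) and β_N := ( a² + t_N − √((t_N−a²)² − 4a²c) )/(2a) (nonnegative real square root; note β_N > a for large N, so the logarithms below are real). Define t·ℓ(t_N) := (t_N + c)·log β_N − c·log(β_N − a) − a·β_N. Then, as N→∞, t·ℓ(t_N) = −a·b_c + b_c²·log b_c − (c/2)·log c + 2·b_c·s·log(b_c)/(γ_c·N^{2/3}) − 2·s^{3/2}/(3N) + O(N^{−4/3}). -/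

import Mathlib

open Filter

/-- `b_c = a + √c`. -/
noncomputable def bcD (a c : ℝ) : ℝ := a + Real.sqrt c

/-- `t_c = a(a + 2√c)`. -/
noncomputable def tcD (a c : ℝ) : ℝ := a * (a + 2 * Real.sqrt c)

/-- `γ_c = 2 b_c^{1/3} c^{1/6} / a^{1/3}`. -/
noncomputable def gamD (a c : ℝ) : ℝ :=
  2 * bcD a c ^ ((1 : ℝ) / 3) * c ^ ((1 : ℝ) / 6) / a ^ ((1 : ℝ) / 3)

/-- The critical point `β(t)` of `φ`. -/
noncomputable def betaFun (a c t : ℝ) : ℝ :=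
  (a ^ 2 + t - Real.sqrt ((t - a ^ 2) ^ 2 - 4 * a ^ 2 * c)) / (2 * a)

/-- The critical time in the Painlevé II window: `t_N = t_c + 2 b_c s/(γ_c N^{2/3})`. -/
noncomputable def tNCrit (a c s N : ℝ) : ℝ :=
  tcD a c + 2 * bcD a c * s / (gamD a c * N ^ ((2 : ℝ) / 3))

/-- `t·ℓ(t) = (t+c) log β(t) - c log(β(t)-a) - a β(t)`. -/
noncomputable def tEll (a c t : ℝ) : ℝ :=
  (t + c) * Real.log (betaFun a c t) - c * Real.log (betaFun a c t - a)
    - a * betaFun a c t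

/-!
Put `t = t_c + K x²` with `x = N^{-1/3}` and `K = 2 b_c s / γ_c`. Since `t_c - a² = 2a√c`, the
discriminant defining `β` becomes `x² (K² x² + 4a√c K)`, so `β = b_c + e` with
`e = -m x + O(x²)`, `m = √(√c K / a)`. Expanding `log β` and `log (β - a)` to third order in `e`,
the linear terms cancel because `b_c - √c = a`, and what is left at order `x³` is
`(K/b_c) x² e - a e³ / (3 b_c √c) ≈ -(2/3) (K m / b_c) x³`. Finally `γ_c³ = 8 b_c √c / a` is
exactly what makes `K m = b_c s^{3/2}`.
-/

open Asymptotics Topology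

namespace Real

theorem isBigO_log_one_add_sub_sum_range (n : ℕ) :
    (fun u : ℝ => log (1 + u) - ∑ i ∈ Finset.range n, (-1) ^ i * u ^ (i + 1) / (i + 1))
      =O[𝓝 0] fun u => u ^ (n + 1) := by
  refine IsBigO.of_bound 2 ?_
  filter_upwards [Metric.ball_mem_nhds (0 : ℝ) one_half_pos] with u hu
  rw [Metric.mem_ball, dist_zero_right, norm_eq_abs] at hu
  have hneg : |-u| < 1 := by rw [abs_neg]; linarith
  have key := abs_log_sub_add_sum_range_le hneg n
  have hsum : ∑ i ∈ Finset.range n, (-u) ^ (i + 1) / ((i : ℝ) + 1)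
      = -∑ i ∈ Finset.range n, (-1) ^ i * u ^ (i + 1) / (i + 1) := by
    rw [← Finset.sum_neg_distrib]
    refine Finset.sum_congr rfl fun i _ => ?_
    rw [neg_pow, pow_succ (-1 : ℝ)]
    ring
  rw [hsum, sub_neg_eq_add, abs_neg, neg_add_eq_sub] at key
  rw [norm_eq_abs, norm_eq_abs, abs_pow]
  calc _ ≤ |u| ^ (n + 1) / (1 - |u|) := key
    _ ≤ 2 * |u| ^ (n + 1) := by
      rw [div_le_iff₀ (by linarith)]
      nlinarith [pow_nonneg (abs_nonneg u) (n + 1)]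

end Real

namespace Asymptotics

variable {α : Type*} {l : Filter α}

theorem IsBigO.log_one_add_sub_sum_range {f g : α → ℝ} (hfg : f =O[l] g)
    (hf : Tendsto f l (𝓝 0)) (n : ℕ) :
    (fun x => Real.log (1 + f x) - ∑ i ∈ Finset.range n, (-1) ^ i * f x ^ (i + 1) / (i + 1))
      =O[l] fun x => g x ^ (n + 1) :=
  ((Real.isBigO_log_one_add_sub_sum_range n).comp_tendsto hf).trans (hfg.pow (n + 1))

theorem IsBigO.mul_of_pow {f g : α → ℝ} {y : α → ℝ} {i j : ℕ}
    (hf : f =O[l] fun x => y x ^ i) (hg : g =O[l] fun x => y x ^ j) :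
    (fun x => f x * g x) =O[l] fun x => y x ^ (i + j) := by
  simpa only [pow_add] using hf.mul hg

end Asymptotics

theorem Real.sqrt_add_sq_sub_sqrt_isBigO {Q : ℝ} (hQ : Q ≠ 0) (K : ℝ) :
    (fun x : ℝ => Real.sqrt (K * x ^ 2 + Q) - Real.sqrt Q) =O[𝓝 0] fun x => x ^ 2 := by
  have hcont : Tendsto (fun x : ℝ => K * x ^ 2 + Q) (𝓝 0) (𝓝 Q) :=
    Continuous.tendsto' (by fun_prop) _ _ (by simp)
  refine ((Real.hasDerivAt_sqrt hQ).isBigO_sub.comp_tendsto hcont).trans ?_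
  simpa [Function.comp_def] using isBigO_const_mul_self K (fun x : ℝ => x ^ 2) (𝓝 0)

/-- The deviation `β(t_c + K x²) - b_c` of the critical point from the merging point. -/
noncomputable def betaDev (a c K x : ℝ) : ℝ :=
  (K * x ^ 2 - x * Real.sqrt (K ^ 2 * x ^ 2 + 4 * a * Real.sqrt c * K)) / (2 * a)

theorem betaFun_tcD_add_sq {a c : ℝ} (ha : a ≠ 0) (hc : 0 ≤ c) (K : ℝ) {x : ℝ} (hx : 0 ≤ x) :
    betaFun a c (tcD a c + K * x ^ 2) = bcD a c + betaDev a c K x := by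
  have hdisc : (tcD a c + K * x ^ 2 - a ^ 2) ^ 2 - 4 * a ^ 2 * c
      = x ^ 2 * (K ^ 2 * x ^ 2 + 4 * a * Real.sqrt c * K) := by
    rw [tcD]
    linear_combination 4 * a ^ 2 * Real.sq_sqrt hc
  rw [betaFun, hdisc, Real.sqrt_mul (sq_nonneg x), Real.sqrt_sq hx, betaDev, bcD, tcD]
  field_simp
  ring

section betaDev

variable {a c K : ℝ}

theorem betaDev_add_isBigO (ha : 0 < a) (hc : 0 < c) (hK : 0 < K) :
    (fun x => betaDev a c K x + Real.sqrt (Real.sqrt c * K / a) * x) =O[𝓝 0] fun x => x ^ 2 := by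
  set Q := 4 * a * Real.sqrt c * K with hQ_def
  have hQ : 0 < Q := by positivity
  have hsqrtQ : Real.sqrt Q = 2 * a * Real.sqrt (Real.sqrt c * K / a) := by
    rw [show Q = (2 * a) ^ 2 * (Real.sqrt c * K / a) by simp only [Q]; field_simp; ring,
      Real.sqrt_mul (by positivity), Real.sqrt_sq (by positivity)]
  have hD := Real.sqrt_add_sq_sub_sqrt_isBigO hQ.ne' (K ^ 2)
  have hxD : (fun x : ℝ => x * (Real.sqrt (K ^ 2 * x ^ 2 + Q) - Real.sqrt Q)) =O[𝓝 0]
      fun x => x ^ 2 := by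
    simpa using ((continuous_id.tendsto (0 : ℝ)).isBigO_one ℝ).mul hD
  have hsum := ((isBigO_refl (fun x : ℝ => x ^ 2) _).const_mul_left K).sub hxD
  refine (hsum.const_mul_left (2 * a)⁻¹).congr_left fun x => ?_
  rw [betaDev, ← hQ_def, hsqrtQ]
  field_simp
  ring

theorem betaDev_isBigO (ha : 0 < a) (hc : 0 < c) (hK : 0 < K) :
    (fun x => betaDev a c K x) =O[𝓝 0] fun x => x := by
  have hsq : (fun x : ℝ => x ^ 2) =O[𝓝 0] fun x => x := by
    simpa using (isLittleO_pow_pow (𝕜 := ℝ) one_lt_two).isBigO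
  refine ((betaDev_add_isBigO ha hc hK).trans hsq).sub
    ((isBigO_refl (fun x : ℝ => x) _).const_mul_left (Real.sqrt (Real.sqrt c * K / a)))
    |>.congr_left fun x => ?_
  ring

end betaDev

theorem tEll_expansion_identity {a b r K m e x : ℝ} (hb : b = a + r) (hb0 : b ≠ 0) (hr0 : r ≠ 0)
    (hm : a * m ^ 2 = r * K) (Lb Lr : ℝ) :
    (b ^ 2 + K * x ^ 2) * (Real.log b + Lb) - r ^ 2 * (Real.log r + Lr) - a * (b + e)
        - (-(a * b) + b ^ 2 * Real.log b - r ^ 2 * Real.log r + K * Real.log b * x ^ 2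
          - 2 / 3 * K * m / b * x ^ 3)
      = b ^ 2 * (Lb - (e / b - (e / b) ^ 2 / 2 + (e / b) ^ 3 / 3))
        - r ^ 2 * (Lr - (e / r - (e / r) ^ 2 / 2 + (e / r) ^ 3 / 3))
        + K * (x ^ 2 * (Lb - e / b)) + K / b * (x ^ 2 * (e + m * x))
        - a / (3 * b * r) * ((e + m * x) * (e ^ 2 - m * (e * x) + m ^ 2 * x ^ 2)) := by
  subst hb
  rw [← sub_eq_zero]
  field_simp
  linear_combination 2 * x ^ 3 * m * hm

theorem tEll_tcD_add_sq {a c : ℝ} (ha : 0 < a) (hc : 0 < c) (K : ℝ) {x : ℝ} (hx : 0 ≤ x)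
    (he : -Real.sqrt c < betaDev a c K x) :
    tEll a c (tcD a c + K * x ^ 2)
      = (bcD a c ^ 2 + K * x ^ 2)
          * (Real.log (bcD a c) + Real.log (1 + betaDev a c K x / bcD a c))
        - Real.sqrt c ^ 2
          * (Real.log (Real.sqrt c) + Real.log (1 + betaDev a c K x / Real.sqrt c))
        - a * (bcD a c + betaDev a c K x) := by
  set r := Real.sqrt c
  set e := betaDev a c K x
  have hr : 0 < r := Real.sqrt_pos.mpr hc
  have hb : bcD a c = a + r := rfl
  have hbpos : 0 < bcD a c := by rw [hb]; positivity
  have hu : 0 < 1 + e / bcD a c := by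
    rw [one_add_div hbpos.ne']
    exact div_pos (by linarith) hbpos
  have hv : 0 < 1 + e / r := by
    rw [one_add_div hr.ne']
    exact div_pos (by linarith) hr
  have hlogb : Real.log (bcD a c + e) = Real.log (bcD a c) + Real.log (1 + e / bcD a c) := by
    rw [← Real.log_mul hbpos.ne' hu.ne', mul_add, mul_div_cancel₀ _ hbpos.ne', mul_one]
  have hlogr : Real.log (bcD a c + e - a) = Real.log r + Real.log (1 + e / r) := by
    rw [← Real.log_mul hr.ne' hv.ne', mul_add, mul_div_cancel₀ _ hr.ne', mul_one, hb]
    ring_nf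
  rw [tEll, betaFun_tcD_add_sq ha.ne' hc.le K hx, hlogb, hlogr, tcD, hb]
  linear_combination (Real.log r + Real.log (1 + e / r) - Real.log (a + r)
    - Real.log (1 + e / (a + r))) * Real.sq_sqrt hc.le

theorem tEll_tcD_add_sq_isBigO {a c K : ℝ} (ha : 0 < a) (hc : 0 < c) (hK : 0 < K) :
    (fun x => tEll a c (tcD a c + K * x ^ 2)
        - (-(a * bcD a c) + bcD a c ^ 2 * Real.log (bcD a c) - c / 2 * Real.log c
          + K * Real.log (bcD a c) * x ^ 2
          - 2 / 3 * K * Real.sqrt (Real.sqrt c * K / a) / bcD a c * x ^ 3))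
      =O[𝓝[>] 0] fun x => x ^ 4 := by
  set r := Real.sqrt c with hr_def
  set b := bcD a c
  set m := Real.sqrt (r * K / a)
  have hr : 0 < r := Real.sqrt_pos.mpr hc
  have hb : b = a + r := rfl
  have hbpos : 0 < b := by rw [hb]; positivity
  have hm : a * m ^ 2 = r * K := by
    rw [Real.sq_sqrt (by positivity)]
    field_simp
  have hE2 : (fun x => betaDev a c K x + m * x) =O[𝓝[>] 0] fun x => x ^ 2 :=
    (betaDev_add_isBigO ha hc hK).mono nhdsWithin_le_nhds
  have hE1 : (fun x => betaDev a c K x) =O[𝓝[>] 0] fun x => x ^ 1 := by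
    simpa using (betaDev_isBigO ha hc hK).mono nhdsWithin_le_nhds
  have hE0 : Tendsto (fun x => betaDev a c K x) (𝓝[>] 0) (𝓝 0) :=
    (betaDev_isBigO ha hc hK).mono nhdsWithin_le_nhds
      |>.trans_tendsto (tendsto_nhdsWithin_of_tendsto_nhds tendsto_id)
  have hdiv (d : ℝ) : (fun x => betaDev a c K x / d) =O[𝓝[>] 0] (fun x => x) ∧
      Tendsto (fun x => betaDev a c K x / d) (𝓝[>] 0) (𝓝 0) :=
    ⟨by simpa only [div_eq_mul_inv, mul_comm, pow_one] using hE1.const_mul_left d⁻¹,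
      by simpa using hE0.div_const d⟩
  have hTaylor (d : ℝ) := (hdiv d).1.log_one_add_sub_sum_range (hdiv d).2
  have hquad : (fun x => betaDev a c K x * betaDev a c K x - m * (betaDev a c K x * x)
      + m ^ 2 * x ^ 2) =O[𝓝[>] 0] fun x => x ^ 2 := by
    have hid : (fun x : ℝ => x) =O[𝓝[>] 0] fun x => x ^ 1 := by simpa using isBigO_refl _ _
    exact ((hE1.mul_of_pow hE1).sub ((hE1.mul_of_pow hid).const_mul_left m)).add
      ((isBigO_refl (fun x : ℝ => x ^ 2) _).const_mul_left (m ^ 2))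
  have hsum := (((((hTaylor b 3).const_mul_left (b ^ 2)).sub
      ((hTaylor r 3).const_mul_left (r ^ 2))).add
      (((isBigO_refl (fun x : ℝ => x ^ 2) _).mul_of_pow (hTaylor b 1)).const_mul_left K)).add
      (((isBigO_refl (fun x : ℝ => x ^ 2) _).mul_of_pow hE2).const_mul_left (K / b))).sub
      ((hE2.mul_of_pow hquad).const_mul_left (a / (3 * b * r)))
  refine hsum.congr' ?_ EventuallyEq.rfl
  filter_upwards [self_mem_nhdsWithin, hE0.eventually (lt_mem_nhds (neg_neg_of_pos hr))]
    with x (hx : 0 < x) he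
  have hlogc : c / 2 * Real.log c = r ^ 2 * Real.log r := by
    rw [hr_def, Real.log_sqrt hc.le, Real.sq_sqrt hc.le]
    ring
  rw [tEll_tcD_add_sq ha hc K hx.le he, hlogc, tEll_expansion_identity hb hbpos.ne' hr.ne' hm]
  simp [Finset.sum_range_succ]
  ring

theorem gamD_pow_three {a c : ℝ} (ha : 0 < a) (hc : 0 < c) :
    gamD a c ^ 3 = 8 * bcD a c * Real.sqrt c / a := by
  have hb : 0 < bcD a c := by rw [bcD]; positivity
  have hcube : ∀ {y : ℝ} (p : ℝ), 0 ≤ y → (y ^ p) ^ 3 = y ^ (3 * p) := fun p hy => by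
    rw [← Real.rpow_natCast, ← Real.rpow_mul hy, mul_comm]
    norm_num
  rw [gamD, div_pow, mul_pow, mul_pow, hcube _ hb.le, hcube _ hc.le, hcube _ ha.le,
    Real.sqrt_eq_rpow]
  norm_num

theorem mul_sqrt_eq_of_gamD {a c s : ℝ} (ha : 0 < a) (hc : 0 < c) (hs : 0 < s) :
    2 * bcD a c * s / gamD a c * Real.sqrt (Real.sqrt c * (2 * bcD a c * s / gamD a c) / a)
      = bcD a c * s ^ ((3 : ℝ) / 2) := by
  have hb : 0 < bcD a c := by rw [bcD]; positivity
  have hγ : 0 < gamD a c := by rw [gamD]; positivity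
  have hr : 0 < Real.sqrt c := Real.sqrt_pos.mpr hc
  refine (sq_eq_sq₀ (by positivity) (by positivity)).mp ?_
  have hs3 : (s ^ ((3 : ℝ) / 2)) ^ 2 = s ^ 3 := by
    rw [← Real.rpow_natCast, ← Real.rpow_mul hs.le]
    norm_num
  have hγ3 := gamD_pow_three ha hc
  rw [mul_pow, Real.sq_sqrt (by positivity), mul_pow, hs3]
  field_simp
  rw [hγ3]
  field_simp
  norm_num

theorem tendsto_rpow_neg_one_third_nhdsGT :
    Tendsto (fun N : ℝ => N ^ (-(1 / 3) : ℝ)) atTop (𝓝[>] 0) :=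
  tendsto_nhdsWithin_of_tendsto_nhds_of_eventually_within _
    (tendsto_rpow_neg_atTop (by norm_num))
    ((eventually_gt_atTop 0).mono fun _ hN => Real.rpow_pos_of_pos hN _)

theorem rpow_neg_one_third_pow {N : ℝ} (hN : 0 ≤ N) (k : ℕ) :
    (N ^ (-(1 / 3) : ℝ)) ^ k = N ^ (-(k : ℝ) / 3) := by
  rw [← Real.rpow_natCast, ← Real.rpow_mul hN]
  ring_nf

/-- Expansion of `t ℓ` at the critical time:
`t ℓ(t_N) = -a b_c + b_c² log b_c - (c/2) log c + 2 b_c s log b_c/(γ_c N^{2/3})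
  - 2 s^{3/2}/(3N) + O(N^{-4/3})`. -/
theorem statement17 (a c s : ℝ) (ha : 0 < a) (hc : 0 < c) (hs : 0 < s) :
    (fun N : ℝ => tEll a c (tNCrit a c s N)
        - (-(a * bcD a c) + bcD a c ^ 2 * Real.log (bcD a c) - c / 2 * Real.log c
          + 2 * bcD a c * s * Real.log (bcD a c) / (gamD a c * N ^ ((2 : ℝ) / 3))
          - 2 * s ^ ((3 : ℝ) / 2) / (3 * N)))
      =O[atTop] fun N : ℝ => N ^ (-(4 : ℝ) / 3) := by
  have hK : 0 < 2 * bcD a c * s / gamD a c := by rw [gamD, bcD]; positivity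
  refine ((tEll_tcD_add_sq_isBigO ha hc hK).comp_tendsto tendsto_rpow_neg_one_third_nhdsGT).congr'
    ?_ ?_ <;> filter_upwards [eventually_gt_atTop 0] with N hN
  · have h2 : (N ^ (-(1 / 3) : ℝ)) ^ 2 = (N ^ ((2 : ℝ) / 3))⁻¹ := by
      rw [rpow_neg_one_third_pow hN.le, neg_div, Real.rpow_neg hN.le]
      norm_num
    have h3 : (N ^ (-(1 / 3) : ℝ)) ^ 3 = N⁻¹ := by
      rw [rpow_neg_one_third_pow hN.le]
      norm_num [Real.rpow_neg_one]
    have harg : tcD a c + 2 * bcD a c * s / gamD a c * (N ^ ((2 : ℝ) / 3))⁻¹ = tNCrit a c s N := by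
      rw [tNCrit]
      ring
    simp only [Function.comp_apply, h2, h3, harg]
    have hb : bcD a c ≠ 0 := by rw [bcD]; positivity
    linear_combination (2 / (3 * bcD a c * N)) * mul_sqrt_eq_of_gamD ha hc hs
      + (2 / 3 * N⁻¹ * s ^ ((3 : ℝ) / 2)) * mul_inv_cancel₀ hb
  · simp only [Function.comp_apply, rpow_neg_one_third_pow hN.le]
    norm_num
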